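/- Let n : ℝⁿ → ℝⁿ be a homogeneous quadratic map (each component a homogeneous polynomial of degree 2), and let V(x) = ⟪Qx, x⟫/2 + ⟪c, x⟫ with Q symmetric. If there exist a quadratic function F and constant B such that F(x) + ⟪n(x) + Lx, ∇V(x)⟫ ≤ B for all x ∈ ℝⁿ (L a linear map), then ⟪n(x), Qx⟫ = 0 for all x. -/
import Mathlib


open scoped RealInnerProductSpace

lemma cubic_bdd_above {a b c d B : ℝ}
    (h : ∀ t : ℝ, a * t ^ 3 + b * t ^ 2 + c * t + d ≤ B) : a = 0 := by
  by_contra ha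
  have ha' : 0 < |a| := abs_pos.mpr ha
  have hb0 : 0 ≤ |b| := abs_nonneg b
  have hc0 : 0 ≤ |c| := abs_nonneg c
  have hd0 : 0 ≤ |d| := abs_nonneg d
  have hB0 : 0 ≤ |B| := abs_nonneg B
  obtain ⟨s, hs1, hs2, hs3⟩ :
      ∃ s : ℝ, 1 ≤ s ∧ |b| + |c| + 1 ≤ |a| * s ∧ |B| + |d| + 1 ≤ s := by
    refine ⟨(|b| + |c| + 1) / |a| + |B| + |d| + 1, ?_, ?_, ?_⟩
    · have : 0 ≤ (|b| + |c| + 1) / |a| := by positivity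
      linarith
    · have h1 : |a| * ((|b| + |c| + 1) / |a|) = |b| + |c| + 1 := by field_simp
      have h2 : 0 ≤ |a| * (|B| + |d| + 1) := by positivity
      nlinarith [h1, h2]
    · have : 0 ≤ (|b| + |c| + 1) / |a| := by positivity
      linarith
  have hs0 : 0 ≤ s := by linarith
  set t : ℝ := if 0 < a then s else -s with ht
  have h1 := h t
  have hat : a * t ^ 3 = |a| * s ^ 3 := by
    rcases abs_cases a with ⟨h2, h3⟩ | ⟨h2, h3⟩
    · have : 0 < a := lt_of_le_of_ne h3 (Ne.symm ha)
      simp [ht, this, h2]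
    · have : ¬ 0 < a := by linarith
      simp [ht, this, h2]; ring
  have ht2 : t ^ 2 = s ^ 2 := by
    rcases le_or_gt a 0 with h2 | h2
    · have : ¬ 0 < a := not_lt.mpr h2
      simp [ht, this]
    · simp [ht, h2]
  have hb : b * t ^ 2 ≥ -(|b| * s ^ 2) := by
    rw [ht2]
    nlinarith [neg_abs_le b, sq_nonneg s]
  have hc : c * t ≥ -(|c| * s) := by
    have habs : |c * t| ≤ |c| * s := by
      rw [abs_mul]
      have : |t| = s := by
        rcases le_or_gt a 0 with h2 | h2
        · have : ¬ 0 < a := not_lt.mpr h2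
          simp [ht, this, abs_of_nonneg hs0]
        · simp [ht, h2, abs_of_nonneg hs0]
      rw [this]
    nlinarith [neg_abs_le (c * t)]
  have hd : d ≥ -|d| := neg_abs_le d
  have hBb : B ≤ |B| := le_abs_self B
  have e1 : (|b| + |c| + 1) * s ^ 2 ≤ |a| * s * s ^ 2 :=
    mul_le_mul_of_nonneg_right hs2 (sq_nonneg s)
  have e1' : |a| * s * s ^ 2 = |a| * s ^ 3 := by ring
  have e2 : s ≤ s ^ 2 := by nlinarith
  have e3 : |c| * s ≤ |c| * s ^ 2 := by nlinarith
  linarith [h1, hat, hb, hc, hd, hBb, e1, e2, e3]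

theorem stmt_3 (N : ℕ)
    (n : EuclideanSpace ℝ (Fin N) → EuclideanSpace ℝ (Fin N))
    (hn : ∀ (c : ℝ) (x : EuclideanSpace ℝ (Fin N)), n (c • x) = c ^ 2 • n x)
    (Q : EuclideanSpace ℝ (Fin N) →ₗ[ℝ] EuclideanSpace ℝ (Fin N))
    (hQ : ∀ x y, ⟪Q x, y⟫ = ⟪x, Q y⟫)
    (c : EuclideanSpace ℝ (Fin N))
    (V : EuclideanSpace ℝ (Fin N) → ℝ)
    (hV : ∀ x, V x = ⟪Q x, x⟫ / 2 + ⟪c, x⟫)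
    (L : EuclideanSpace ℝ (Fin N) →ₗ[ℝ] EuclideanSpace ℝ (Fin N))
    (A : EuclideanSpace ℝ (Fin N) →ₗ[ℝ] EuclideanSpace ℝ (Fin N))
    (b : EuclideanSpace ℝ (Fin N)) (d : ℝ)
    (F : EuclideanSpace ℝ (Fin N) → ℝ)
    (hF : ∀ x, F x = ⟪A x, x⟫ + ⟪b, x⟫ + d)
    (B : ℝ)
    (hB : ∀ x, F x + ⟪n x + L x, Q x + c⟫ ≤ B) :
    ∀ x, ⟪n x, Q x⟫ = 0 := by
  intro x
  have key : ∀ t : ℝ,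
      ⟪n x, Q x⟫ * t ^ 3 + (⟪A x, x⟫ + ⟪n x, c⟫ + ⟪L x, Q x⟫) * t ^ 2 +
        (⟪b, x⟫ + ⟪L x, c⟫) * t + d ≤ B := by
    intro t
    have h := hB (t • x)
    rw [hF] at h
    rw [hn] at h
    simp only [map_smul] at h
    simp only [inner_add_left, inner_add_right, real_inner_smul_left,
      real_inner_smul_right] at h
    nlinarith [h]
  exact cubic_bdd_above key
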